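/- arXiv:2002.00189 — 3 statements merged into one kernel-verified Lean document; each statement's English description precedes it below -/
import Mathlib

section
/- Let α_t satisfy the continuous-time mirror descent flow (d/dt)∇ψ(α_t) = −∇R_n(α_t) for least-squares risk R_n with data (x_i, y_i), i = 1,…,n, and differentiable strictly convex mirror map ψ. Fix any α' and ε > 0, and let T = 2·D_ψ(α', α_0)/ε. Then there exists t* ∈ [0, T] such that (i) R_n(α_{t*}) − R_n(α') + (1/(2n))∑_i(⟨x_i, α_{t*}⟩ − ⟨x_i, α'⟩)² ≤ ε, and (ii) for all 0 ≤ t ≤ t*, D_ψ(α', α_t) ≤ D_ψ(α', α_0). -/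
open scoped RealInnerProductSpace
open Finset Set

/-!
Along the flow, `L t = D_ψ(α', α_t)` has derivative `⟪∇R_n(α_t), α' - α_t⟫`, and since `R_n` is
quadratic this is exactly `-f t` with `f t = R_n(α_t) - R_n(α') + ‖g_{α_t} - g_{α'}‖_n²`.
Convexity of `ψ` gives `L ≥ 0`, so the mean value theorem on `[0, L 0 / ε]` yields a time with
`f ≤ ε` (when `L 0 = 0`, Fermat's rule at the minimum `0` gives `f 0 = 0`). The first such time
is `t*`; before it `f > ε > 0`, so `L` decreases on `[0, t*]`.
-/

theorem ConvexOn.add_fderiv_sub_le {E : Type*} [NormedAddCommGroup E] [NormedSpace ℝ E]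
    {ψ : E → ℝ} {ψ' : E →L[ℝ] ℝ} {b : E} (hψ : ConvexOn ℝ univ ψ) (hψ' : HasFDerivAt ψ ψ' b)
    (a : E) : ψ b + ψ' (a - b) ≤ ψ a := by
  have hline : ConvexOn ℝ univ (ψ ∘ AffineMap.lineMap (k := ℝ) b a) := hψ.comp_affineMap _
  have hderiv : HasDerivAt (ψ ∘ AffineMap.lineMap (k := ℝ) b a) (ψ' (a - b)) 0 := by
    have hψ₀ : HasFDerivAt ψ ψ' (AffineMap.lineMap b a (0 : ℝ)) := by simpa using hψ'
    exact hψ₀.comp_hasDerivAt 0 AffineMap.hasDerivAt_lineMap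
  have := hline.le_slope_of_hasDerivAt (mem_univ 0) (mem_univ 1) one_pos hderiv
  simp only [slope_def_field, Function.comp_apply, AffineMap.lineMap_apply_zero,
    AffineMap.lineMap_apply_one, sub_zero, div_one] at this
  linarith

section Bregman

variable {E : Type*} [NormedAddCommGroup E] [InnerProductSpace ℝ E] [CompleteSpace E]
  {ψ : E → ℝ} {gψ : E → E}

def bregmanDiv (ψ : E → ℝ) (gψ : E → E) (a b : E) : ℝ := ψ a - ψ b - ⟪gψ b, a - b⟫

theorem bregmanDiv_nonneg {b : E} (hψ : ConvexOn ℝ univ ψ) (hgψ : HasGradientAt ψ (gψ b) b)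
    (a : E) : 0 ≤ bregmanDiv ψ gψ a b := by
  have := hψ.add_fderiv_sub_le hgψ.hasFDerivAt a
  rw [InnerProductSpace.toDual_apply_apply] at this
  rw [bregmanDiv]
  linarith

theorem hasDerivAt_bregmanDiv_comp {α : ℝ → E} {t : ℝ} {v u : E}
    (hgψ : HasGradientAt ψ (gψ (α t)) (α t)) (hα : HasDerivAt α v t)
    (hu : HasDerivAt (fun s => gψ (α s)) u t) (a : E) :
    HasDerivAt (fun s => bregmanDiv ψ gψ a (α s)) (-⟪u, a - α t⟫) t := by
  have hψα : HasDerivAt (fun s => ψ (α s)) ⟪gψ (α t), v⟫ t := by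
    have h := hgψ.hasFDerivAt.comp_hasDerivAt t hα
    simp only [Function.comp_def, InnerProductSpace.toDual_apply_apply] at h
    exact h
  refine (((hasDerivAt_const t (ψ a)).sub hψα).sub (hu.inner ℝ (hα.const_sub a))).congr_deriv ?_
  rw [inner_neg_right]
  ring

end Bregman

section LeastSquares

variable {E ι : Type*} [NormedAddCommGroup E] [InnerProductSpace ℝ E] [Fintype ι]
  (x : ι → E) (y : ι → ℝ)

theorem hasFDerivAt_sum_sq_inner_sub (a : E) :
    HasFDerivAt (fun b => ∑ i, (⟪x i, b⟫ - y i) ^ 2)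
      (∑ i, (2 * (⟪x i, a⟫ - y i)) • innerSL ℝ (x i)) a := by
  refine HasFDerivAt.fun_sum fun i _ => ?_
  refine ((((innerSL ℝ (x i)).hasFDerivAt).sub_const (y i)).pow 2).congr_fderiv ?_
  norm_num [innerSL_apply_apply]

theorem leastSquares_eq_add_inner_gradient [CompleteSpace E] {R : E → ℝ} {c : ℝ}
    (hR : ∀ a, R a = c * ∑ i, (⟪x i, a⟫ - y i) ^ 2) {g a : E} (hg : HasGradientAt R g a)
    (b : E) : R b = R a + ⟪g, b - a⟫ + c * ∑ i, ⟪x i, b - a⟫ ^ 2 := by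
  have hR' : HasFDerivAt R (c • ∑ i, (2 * (⟪x i, a⟫ - y i)) • innerSL ℝ (x i)) a := by
    rw [funext hR]
    exact (hasFDerivAt_sum_sq_inner_sub x y a).const_mul c
  have hg' := congrArg (fun L => L (b - a)) (hg.hasFDerivAt.unique hR')
  simp only [InnerProductSpace.toDual_apply_apply, smul_apply,
    FunLike.coe_sum, Finset.sum_apply, innerSL_apply_apply, smul_eq_mul] at hg'
  rw [hg', hR, hR, ← mul_add, ← mul_add, ← sum_add_distrib, ← sum_add_distrib]
  congr 1
  refine sum_congr rfl fun i _ => ?_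
  rw [inner_sub_right]
  ring

end LeastSquares

theorem exists_mem_Icc_le_of_hasDerivAt_neg {L f : ℝ → ℝ} (hL : ∀ t, HasDerivAt L (-f t) t)
    (hL_nonneg : ∀ t, 0 ≤ L t) {ε T : ℝ} (hε : 0 ≤ ε) (hT : 0 ≤ T) (hLT : L 0 ≤ ε * T) :
    ∃ t ∈ Icc 0 T, f t ≤ ε := by
  rcases hT.eq_or_lt with rfl | hT
  · have hL0 : L 0 = 0 := le_antisymm (by simpa using hLT) (hL_nonneg 0)
    have hmin : IsLocalMin L 0 := .of_forall fun t => by rw [hL0]; exact hL_nonneg t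
    have := hmin.hasDerivAt_eq_zero (hL 0)
    exact ⟨0, left_mem_Icc.2 le_rfl, by linarith⟩
  · obtain ⟨c, hc, hslope⟩ := exists_hasDerivAt_eq_slope L (fun t => -f t) hT
      (fun t _ => (hL t).continuousAt.continuousWithinAt) (fun t _ => hL t)
    rw [sub_zero, eq_div_iff hT.ne'] at hslope
    refine ⟨c, Ioo_subset_Icc_self hc, le_of_mul_le_mul_right ?_ hT⟩
    linarith [hL_nonneg T]

theorem exists_first_le_of_exists_le {f : ℝ → ℝ} {a b ε : ℝ} (hf : ContinuousOn f (Icc a b))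
    (h : ∃ t ∈ Icc a b, f t ≤ ε) : ∃ t ∈ Icc a b, f t ≤ ε ∧ ∀ s ∈ Ico a t, ε < f s := by
  set S := Icc a b ∩ f ⁻¹' Iic ε
  have hS : IsClosed S := hf.preimage_isClosed_of_isClosed isClosed_Icc isClosed_Iic
  have hS_bdd : BddBelow S := ⟨a, fun t ht => ht.1.1⟩
  obtain ⟨hmem, hle⟩ := hS.csInf_mem h hS_bdd
  refine ⟨sInf S, hmem, hle, fun s hs => lt_of_not_ge fun hfs => ?_⟩
  have : sInf S ≤ s := csInf_le hS_bdd ⟨⟨hs.1, hs.2.le.trans hmem.2⟩, hfs⟩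
  exact hs.2.not_ge this

theorem exists_stopping_time_of_hasDerivAt_neg {L f : ℝ → ℝ} (hL : ∀ t, HasDerivAt L (-f t) t)
    (hf : Continuous f) (hL_nonneg : ∀ t, 0 ≤ L t) {ε : ℝ} (hε : 0 < ε) :
    ∃ t₀ ∈ Icc 0 (2 * L 0 / ε), f t₀ ≤ ε ∧ ∀ t ∈ Icc 0 t₀, L t ≤ L 0 := by
  have hT : 0 ≤ 2 * L 0 / ε := by have := hL_nonneg 0; positivity
  have hLT : L 0 ≤ ε * (2 * L 0 / ε) := by
    rw [mul_div_cancel₀ _ hε.ne']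
    linarith [hL_nonneg 0]
  obtain ⟨t₀, ht₀, hft₀, hfirst⟩ := exists_first_le_of_exists_le hf.continuousOn
    (exists_mem_Icc_le_of_hasDerivAt_neg hL hL_nonneg hε.le hT hLT)
  have hanti : AntitoneOn L (Icc 0 t₀) := by
    refine antitoneOn_of_hasDerivWithinAt_nonpos (convex_Icc 0 t₀)
      (fun t _ => (hL t).continuousAt.continuousWithinAt) (fun t _ => (hL t).hasDerivWithinAt)
      fun t ht => ?_
    rw [interior_Icc] at ht
    linarith [hfirst t ⟨ht.1.le, ht.2⟩]
  exact ⟨t₀, ht₀, hft₀, fun t ht => hanti (left_mem_Icc.2 ht₀.1) ht ht.1⟩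

theorem continuous_time_early_stopping_general {n m : ℕ}
    (x : Fin n → EuclideanSpace ℝ (Fin m)) (y : Fin n → ℝ)
    (Rn : EuclideanSpace ℝ (Fin m) → ℝ)
    (hRn : ∀ a, Rn a = 1 / (2 * n) * ∑ i, (⟪x i, a⟫ - y i) ^ 2)
    (gRn : EuclideanSpace ℝ (Fin m) → EuclideanSpace ℝ (Fin m))
    (hgRn : ∀ a, HasGradientAt Rn (gRn a) a)
    (ψ : EuclideanSpace ℝ (Fin m) → ℝ)
    (gψ : EuclideanSpace ℝ (Fin m) → EuclideanSpace ℝ (Fin m))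
    (hψconv : StrictConvexOn ℝ Set.univ ψ)
    (hψgrad : ∀ a, HasGradientAt ψ (gψ a) a)
    (Dψ : EuclideanSpace ℝ (Fin m) → EuclideanSpace ℝ (Fin m) → ℝ)
    (hD : ∀ a b, Dψ a b = ψ a - ψ b - ⟪gψ b, a - b⟫)
    (α : ℝ → EuclideanSpace ℝ (Fin m)) (α'' : ℝ → EuclideanSpace ℝ (Fin m))
    (hα : ∀ t, HasDerivAt α (α'' t) t)
    (hflow : ∀ t, HasDerivAt (fun s => gψ (α s)) (-gRn (α t)) t)
    (α' : EuclideanSpace ℝ (Fin m))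
    (ε : ℝ) (hε : 0 < ε)
    (T : ℝ) (hT : T = 2 * Dψ α' (α 0) / ε) :
    ∃ tstar ∈ Icc (0 : ℝ) T,
      (Rn (α tstar) - Rn α'
        + 1 / (2 * n) * ∑ i, (⟪x i, α tstar⟫ - ⟪x i, α'⟫) ^ 2 ≤ ε) ∧
      ∀ t, 0 ≤ t → t ≤ tstar → Dψ α' (α t) ≤ Dψ α' (α 0) := by
  have hD' : Dψ = bregmanDiv ψ gψ := funext₂ hD
  set f : ℝ → ℝ := fun t => Rn (α t) - Rn α'
    + 1 / (2 * n) * ∑ i, (⟪x i, α t⟫ - ⟪x i, α'⟫) ^ 2 with hf_def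
  have hf : Continuous f := by
    have : Continuous α := continuous_iff_continuousAt.2 fun t => (hα t).continuousAt
    have : Continuous Rn := continuous_iff_continuousAt.2 fun a => (hgRn a).continuousAt
    fun_prop
  have hL : ∀ t, HasDerivAt (fun s => Dψ α' (α s)) (-f t) t := by
    intro t
    rw [hD']
    refine (hasDerivAt_bregmanDiv_comp (hψgrad (α t)) (hα t) (hflow t) α').congr_deriv ?_
    have hTaylor := leastSquares_eq_add_inner_gradient x y hRn (hgRn (α t)) α'
    have hsq : ∀ i, ⟪x i, α' - α t⟫ ^ 2 = (⟪x i, α t⟫ - ⟪x i, α'⟫) ^ 2 := fun i => by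
      rw [inner_sub_right]; ring
    simp only [hsq] at hTaylor
    rw [inner_neg_left, neg_neg, hf_def]
    linarith
  subst hT
  obtain ⟨t₀, ht₀, hft₀, hbound⟩ := exists_stopping_time_of_hasDerivAt_neg hL hf
    (fun t => hD' ▸ bregmanDiv_nonneg hψconv.convexOn (hψgrad (α t)) α') hε
  exact ⟨t₀, ht₀, hft₀, fun t ht₀ ht => hbound t ⟨ht₀, ht⟩⟩

/-- Continuous-time early stopping theorem (Theorem 1): for mirror descent flow on
least-squares risk, with `T = 2 D_ψ(α', α_0)/ε`, there exists a stopping time `t* ∈ [0, T]`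
at which the excess risk plus squared empirical distance is at most `ε`, and the iterates
stay in the Bregman ball `D_ψ(α', α_t) ≤ D_ψ(α', α_0)` up to `t*`. -/
theorem continuous_time_early_stopping {n m : ℕ} (hn : 0 < n)
    (x : Fin n → EuclideanSpace ℝ (Fin m)) (y : Fin n → ℝ)
    (Rn : EuclideanSpace ℝ (Fin m) → ℝ)
    (hRn : ∀ a, Rn a = 1 / (2 * n) * ∑ i, (⟪x i, a⟫ - y i) ^ 2)
    (gRn : EuclideanSpace ℝ (Fin m) → EuclideanSpace ℝ (Fin m))
    (hgRn : ∀ a, HasGradientAt Rn (gRn a) a)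
    (ψ : EuclideanSpace ℝ (Fin m) → ℝ)
    (gψ : EuclideanSpace ℝ (Fin m) → EuclideanSpace ℝ (Fin m))
    (hψconv : StrictConvexOn ℝ Set.univ ψ)
    (hψgrad : ∀ a, HasGradientAt ψ (gψ a) a)
    (Dψ : EuclideanSpace ℝ (Fin m) → EuclideanSpace ℝ (Fin m) → ℝ)
    (hD : ∀ a b, Dψ a b = ψ a - ψ b - ⟪gψ b, a - b⟫)
    (α : ℝ → EuclideanSpace ℝ (Fin m)) (α'' : ℝ → EuclideanSpace ℝ (Fin m))
    (hα : ∀ t, HasDerivAt α (α'' t) t)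
    (hflow : ∀ t, HasDerivAt (fun s => gψ (α s)) (-gRn (α t)) t)
    (α' : EuclideanSpace ℝ (Fin m))
    (ε : ℝ) (hε : 0 < ε)
    (T : ℝ) (hT : T = 2 * Dψ α' (α 0) / ε) :
    ∃ tstar ∈ Icc (0 : ℝ) T,
      (Rn (α tstar) - Rn α'
        + 1 / (2 * n) * ∑ i, (⟪x i, α tstar⟫ - ⟪x i, α'⟫) ^ 2 ≤ ε) ∧
      ∀ t, 0 ≤ t → t ≤ tstar → Dψ α' (α t) ≤ Dψ α' (α 0) :=
  continuous_time_early_stopping_general x y Rn hRn gRn hgRn ψ gψ hψconv hψgrad Dψ hD α α'' hα hflow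
    α' ε hε T hT
end

section
/- Under the same flow as in the continuous-time theorem, the Bregman divergence t ↦ D_ψ(α', α_t) is nonincreasing on any interval where R_n(α_t) ≥ R_n(α'); in particular, if α' is a global minimizer of R_n, then D_ψ(α', α_t) is nonincreasing for all t ≥ 0. -/
/-!
Differentiating the Bregman potential along the mirror flow, the terms coming from `ψ (α t)`
cancel and `d/dt D_ψ(α', α_t) = ⟪∇R_n(α_t), α' - α_t⟫`. Since `R_n` is quadratic, this equals
`-(R_n(α_t) - R_n(α')) - ‖g_{α_t} - g_{α'}‖_n²`, which is nonpositive wherever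
`R_n(α') ≤ R_n(α_t)`; the mean value theorem then gives monotonicity.
-/

open scoped RealInnerProductSpace
open Finset Set

section Gradient

variable {E : Type*} [NormedAddCommGroup E] [InnerProductSpace ℝ E] [CompleteSpace E]

theorem HasGradientAt.comp_hasDerivAt {f : E → ℝ} {g v : E} {γ : ℝ → E} {t : ℝ}
    (hf : HasGradientAt f g (γ t)) (hγ : HasDerivAt γ v t) :
    HasDerivAt (fun s => f (γ s)) ⟪g, v⟫ t := by
  have h := hf.hasFDerivAt.comp_hasDerivAt t hγ
  simp only [InnerProductSpace.toDual_apply_apply] at h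
  exact h

theorem hasDerivAt_bregman_along_curve {ψ : E → ℝ} {gψ : E → E} {γ : ℝ → E} {γ' v : E}
    {t : ℝ} (hψ : HasGradientAt ψ (gψ (γ t)) (γ t)) (hγ : HasDerivAt γ γ' t)
    (hgψγ : HasDerivAt (fun s => gψ (γ s)) v t) (p : E) :
    HasDerivAt (fun s => ψ p - ψ (γ s) - ⟪gψ (γ s), p - γ s⟫) (-⟪v, p - γ t⟫) t := by
  refine (((hψ.comp_hasDerivAt hγ).const_sub (ψ p)).fun_sub
    (hgψγ.inner ℝ (hγ.const_sub p))).congr_deriv ?_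
  rw [inner_neg_right]
  ring

theorem inner_gradient_sub_of_eq_sum_sq {ι : Type*} [Fintype ι] (x : ι → E) (y : ι → ℝ)
    (c : ℝ) {R : E → ℝ} (hR : ∀ a, R a = c * ∑ i, (⟪x i, a⟫ - y i) ^ 2) {a g : E}
    (hg : HasGradientAt R g a) (b : E) :
    ⟪g, b - a⟫ = R b - R a - c * ∑ i, ⟪x i, b - a⟫ ^ 2 := by
  set r : ι → ℝ := fun i => ⟪x i, a⟫ - y i
  set d : ι → ℝ := fun i => ⟪x i, b - a⟫
  have hline : ∀ s : ℝ, R (a + s • (b - a)) = c * ∑ i, (r i + s * d i) ^ 2 := fun s => by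
    simp only [hR, r, d, inner_add_right, real_inner_smul_right]
    congr 1
    exact Finset.sum_congr rfl fun i _ => by ring
  have hpoly : HasDerivAt (fun s : ℝ => c * ∑ i, (r i + s * d i) ^ 2)
      (c * ∑ i, 2 * r i * d i) 0 := by
    have hterm : ∀ i, HasDerivAt (fun s : ℝ => (r i + s * d i) ^ 2) (2 * r i * d i) 0 :=
      fun i => by
        refine ((((hasDerivAt_id' (0 : ℝ)).mul_const (d i)).const_add (r i)).fun_pow 2
          ).congr_deriv ?_
        ring
    exact (HasDerivAt.fun_sum fun i _ => hterm i).const_mul c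
  have hγ : HasDerivAt (fun s : ℝ => a + s • (b - a)) (b - a) 0 := by
    simpa using ((hasDerivAt_id (0 : ℝ)).smul_const (b - a)).const_add a
  have hdir : HasDerivAt (fun s : ℝ => R (a + s • (b - a))) ⟪g, b - a⟫ 0 :=
    (show HasGradientAt R g (a + (0 : ℝ) • (b - a)) by simpa using hg).comp_hasDerivAt hγ
  have hb : R b = c * ∑ i, (r i + d i) ^ 2 := by simpa using hline 1
  rw [hdir.unique (by simpa only [hline] using hpoly), hb, hR a, ← mul_sub, ← mul_sub,
    ← Finset.sum_sub_distrib, ← Finset.sum_sub_distrib]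
  exact congrArg (c * ·) (Finset.sum_congr rfl fun i _ => by ring)

theorem inner_gradient_sub_le_of_eq_sum_sq {ι : Type*} [Fintype ι] (x : ι → E) (y : ι → ℝ)
    {c : ℝ} (hc : 0 ≤ c) {R : E → ℝ} (hR : ∀ a, R a = c * ∑ i, (⟪x i, a⟫ - y i) ^ 2) {a g : E}
    (hg : HasGradientAt R g a) (b : E) :
    ⟪g, b - a⟫ ≤ R b - R a := by
  have hquad : 0 ≤ c * ∑ i, ⟪x i, b - a⟫ ^ 2 :=
    mul_nonneg hc (Finset.sum_nonneg fun i _ => sq_nonneg _)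
  linarith [inner_gradient_sub_of_eq_sum_sq x y c hR hg b]

end Gradient

theorem antitoneOn_of_hasDerivAt_of_nonpos {D : Set ℝ} (hD : Convex ℝ D) {f f' : ℝ → ℝ}
    (hf : ∀ x, HasDerivAt f (f' x) x) (hf' : ∀ x ∈ D, f' x ≤ 0) : AntitoneOn f D :=
  antitoneOn_of_hasDerivWithinAt_nonpos hD (fun x _ => (hf x).continuousAt.continuousWithinAt)
    (fun x _ => (hf x).hasDerivWithinAt) fun x hx => hf' x (interior_subset hx)

theorem bregman_potential_antitone_general {n m : ℕ}
    (x : Fin n → EuclideanSpace ℝ (Fin m)) (y : Fin n → ℝ)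
    (Rn : EuclideanSpace ℝ (Fin m) → ℝ)
    (hRn : ∀ a, Rn a = 1 / (2 * n) * ∑ i, (⟪x i, a⟫ - y i) ^ 2)
    (gRn : EuclideanSpace ℝ (Fin m) → EuclideanSpace ℝ (Fin m))
    (hgRn : ∀ a, HasGradientAt Rn (gRn a) a)
    (ψ : EuclideanSpace ℝ (Fin m) → ℝ)
    (gψ : EuclideanSpace ℝ (Fin m) → EuclideanSpace ℝ (Fin m))
    (hψgrad : ∀ a, HasGradientAt ψ (gψ a) a)
    (Dψ : EuclideanSpace ℝ (Fin m) → EuclideanSpace ℝ (Fin m) → ℝ)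
    (hD : ∀ a b, Dψ a b = ψ a - ψ b - ⟪gψ b, a - b⟫)
    (α : ℝ → EuclideanSpace ℝ (Fin m)) (α'' : ℝ → EuclideanSpace ℝ (Fin m))
    (hα : ∀ t, HasDerivAt α (α'' t) t)
    (hflow : ∀ t, HasDerivAt (fun s => gψ (α s)) (-gRn (α t)) t)
    (α' : EuclideanSpace ℝ (Fin m)) :
    (∀ a b : ℝ, (∀ t ∈ Icc a b, Rn α' ≤ Rn (α t)) →
      AntitoneOn (fun t => Dψ α' (α t)) (Icc a b)) ∧
    ((∀ β : EuclideanSpace ℝ (Fin m), Rn α' ≤ Rn β) →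
      AntitoneOn (fun t => Dψ α' (α t)) (Ici 0)) := by
  have hderiv : ∀ t, HasDerivAt (fun s => Dψ α' (α s)) ⟪gRn (α t), α' - α t⟫ t := fun t => by
    simpa only [hD, inner_neg_left, neg_neg] using
      hasDerivAt_bregman_along_curve (hψgrad (α t)) (hα t) (hflow t) α'
  have hdecay : ∀ t, Rn α' ≤ Rn (α t) → ⟪gRn (α t), α' - α t⟫ ≤ 0 := fun t ht => by
    linarith [inner_gradient_sub_le_of_eq_sum_sq x y (by positivity) hRn (hgRn (α t)) α']
  exact ⟨fun a b hab => antitoneOn_of_hasDerivAt_of_nonpos (convex_Icc a b) hderiv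
      fun t ht => hdecay t (hab t ht),
    fun hmin => antitoneOn_of_hasDerivAt_of_nonpos (convex_Ici 0) hderiv
      fun t _ => hdecay t (hmin (α t))⟩

/-- Along the mirror descent flow, `t ↦ D_ψ(α', α_t)` is nonincreasing on any interval where
`R_n(α_t) ≥ R_n(α')`; in particular, if `α'` is a global minimizer of `R_n`, it is
nonincreasing on all of `[0, ∞)`. -/
theorem bregman_potential_antitone {n m : ℕ} (hn : 0 < n)
    (x : Fin n → EuclideanSpace ℝ (Fin m)) (y : Fin n → ℝ)
    (Rn : EuclideanSpace ℝ (Fin m) → ℝ)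
    (hRn : ∀ a, Rn a = 1 / (2 * n) * ∑ i, (⟪x i, a⟫ - y i) ^ 2)
    (gRn : EuclideanSpace ℝ (Fin m) → EuclideanSpace ℝ (Fin m))
    (hgRn : ∀ a, HasGradientAt Rn (gRn a) a)
    (ψ : EuclideanSpace ℝ (Fin m) → ℝ)
    (gψ : EuclideanSpace ℝ (Fin m) → EuclideanSpace ℝ (Fin m))
    (hψconv : StrictConvexOn ℝ Set.univ ψ)
    (hψgrad : ∀ a, HasGradientAt ψ (gψ a) a)
    (Dψ : EuclideanSpace ℝ (Fin m) → EuclideanSpace ℝ (Fin m) → ℝ)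
    (hD : ∀ a b, Dψ a b = ψ a - ψ b - ⟪gψ b, a - b⟫)
    (α : ℝ → EuclideanSpace ℝ (Fin m)) (α'' : ℝ → EuclideanSpace ℝ (Fin m))
    (hα : ∀ t, HasDerivAt α (α'' t) t)
    (hflow : ∀ t, HasDerivAt (fun s => gψ (α s)) (-gRn (α t)) t)
    (α' : EuclideanSpace ℝ (Fin m)) :
    (∀ a b : ℝ, (∀ t ∈ Icc a b, Rn α' ≤ Rn (α t)) →
      AntitoneOn (fun t => Dψ α' (α t)) (Icc a b)) ∧
    ((∀ β : EuclideanSpace ℝ (Fin m), Rn α' ≤ Rn β) →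
      AntitoneOn (fun t => Dψ α' (α t)) (Ici 0)) :=
  bregman_potential_antitone_general x y Rn hRn gRn hgRn ψ gψ hψgrad Dψ hD α α'' hα hflow α'
end

section
/- Let X ∈ ℝ^{n×m}, y ∈ ℝ^n, R_n(α) = (1/(2n))‖Xα − y‖₂², and consider gradient descent α_{t+1} = α_t − η∇R_n(α_t) with 0 < η ≤ n/λ_max(XᵀX). Fix any α' and ε > 0, and let T = ⌈(‖α' − α_0‖₂²/2 + ηR_n(α'))/(ηε)⌉. Then there exists t* ∈ {0,…,T} such that R_n(α_{t*}) − R_n(α') + (1/(2n))‖Xα_{t*} − Xα'‖₂² ≤ ε, and for all 1 ≤ t ≤ t*, ‖α' − α_t‖₂²/2 ≤ ‖α' − α_0‖₂²/2 + ηR_n(α'). -/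
open scoped RealInnerProductSpace
open Finset Matrix

/-!
Along the iterates, the potential `Φ t = ‖α' - α t‖² / 2 + η R(α t)` drops by at least `η` times
the gap `R(α t) - R(α') + ‖X (α t - α')‖² / (2n)`: expanding `‖α' - α (t+1)‖²` and using the exact
quadratic expansion of `R`, the step-size condition `η λ_max(XᵀX) ≤ n` lets half of the descent
`η ‖∇R‖²` absorb the curvature term. As `Φ ≥ 0` and `Φ 1 ≤ ‖α' - α 0‖² / 2 + η R(α')`, the gap
cannot stay above `ε` for `T` consecutive steps, and up to the first step where it falls below `ε`
the potential does not increase, which keeps `α t` in the ball.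
-/

section GradientStep

variable {E : Type*} [NormedAddCommGroup E] [InnerProductSpace ℝ E]

theorem gradient_step_potential_le {f q : E → ℝ} {g : E → E} {η : ℝ}
    (hexp : ∀ a b, f b = f a + ⟪g a, b - a⟫ + q (b - a)) (hq : ∀ v, η * q v ≤ ‖v‖ ^ 2 / 2)
    (a a' : E) :
    ‖a' - (a - η • g a)‖ ^ 2 / 2 + η * f (a - η • g a)
      ≤ ‖a' - a‖ ^ 2 / 2 + η * f a - η * (f a - f a' + q (a' - a)) := by
  have hdescent := hexp a (a - η • g a)
  have hcomparator := hexp a a'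
  have hsmooth := hq (-(η • g a))
  rw [sub_sub_cancel_left, inner_neg_right, real_inner_smul_right,
    real_inner_self_eq_norm_sq] at hdescent
  rw [norm_neg, norm_smul, mul_pow, Real.norm_eq_abs, sq_abs] at hsmooth
  rw [show a' - (a - η • g a) = (a' - a) + η • g a by abel, norm_add_sq_real,
    real_inner_smul_right, norm_smul, mul_pow, Real.norm_eq_abs, sq_abs, real_inner_comm,
    hdescent, hcomparator]
  linarith

end GradientStep

section EarlyStopping

variable {Φ gap : ℕ → ℝ} {η : ℝ}

theorem le_sub_mul_sum_of_forall_le_sub_mul (hstep : ∀ t, Φ (t + 1) ≤ Φ t - η * gap t)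
    (s k : ℕ) : Φ (s + k) ≤ Φ s - η * ∑ i ∈ range k, gap (s + i) := by
  induction k with
  | zero => simp
  | succ k ih =>
    rw [sum_range_succ, mul_add, ← add_assoc]
    linarith [hstep (s + k)]

theorem exists_le_ceil_gap_le_and_forall_le (hη : 0 < η) {ε C : ℝ} (hε : 0 < ε) (hC : 0 < C)
    (hΦ : ∀ t, 0 ≤ Φ t) (hstep : ∀ t, Φ (t + 1) ≤ Φ t - η * gap t) (hΦ₁ : Φ 1 ≤ C) :
    ∃ t₀ ≤ ⌈C / (η * ε)⌉₊, gap t₀ ≤ ε ∧ ∀ t, 1 ≤ t → t ≤ t₀ → Φ t ≤ C := by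
  set T := ⌈C / (η * ε)⌉₊
  have hex : ∃ t ≤ T, gap t ≤ ε := by
    by_contra! hgap
    have hT : 0 < T := Nat.ceil_pos.mpr (by positivity)
    have hsum : T * ε < ∑ i ∈ range T, gap (1 + i) := by
      calc T * ε = ∑ i ∈ range T, ε := by simp
        _ < ∑ i ∈ range T, gap (1 + i) :=
          sum_lt_sum_of_nonempty (nonempty_range_iff.mpr hT.ne') fun i hi =>
            hgap _ (by rw [mem_range] at hi; omega)
    have hCT : C ≤ T * (η * ε) := (div_le_iff₀ (by positivity)).mp (Nat.le_ceil _)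
    nlinarith [le_sub_mul_sum_of_forall_le_sub_mul hstep 1 T, hΦ (1 + T)]
  obtain ⟨t₁, ht₁T, hgap₁⟩ := hex
  have hfind : ∃ t, gap t ≤ ε := ⟨t₁, hgap₁⟩
  refine ⟨Nat.find hfind, (Nat.find_min' hfind hgap₁).trans ht₁T, Nat.find_spec hfind,
    fun t h1t ht => ?_⟩
  obtain ⟨k, rfl⟩ := Nat.exists_eq_add_of_le h1t
  have hgap_nonneg : 0 ≤ ∑ i ∈ range k, gap (1 + i) := sum_nonneg fun i hi =>
    (hε.trans (not_le.mp (Nat.find_min hfind (by rw [mem_range] at hi; omega)))).le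
  linarith [le_sub_mul_sum_of_forall_le_sub_mul hstep 1 k, mul_nonneg hη.le hgap_nonneg]

end EarlyStopping

section LeastSquares

variable {E F : Type*} [NormedAddCommGroup E] [InnerProductSpace ℝ E] [CompleteSpace E]
  [NormedAddCommGroup F] [InnerProductSpace ℝ F] {L : E →L[ℝ] F} {y : F} {c : ℝ} {a g : E}

theorem HasGradientAt.inner_eq_of_const_mul_norm_sub_sq
    (h : HasGradientAt (fun x => c * ‖L x - y‖ ^ 2) g a) (v : E) :
    ⟪g, v⟫ = 2 * c * ⟪L a - y, L v⟫ := by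
  have hderiv := congrArg (· v) <| (hasGradientAt_iff_hasFDerivAt.mp h).unique
    ((L.hasFDerivAt.sub_const y).norm_sq.const_mul c)
  simp only [InnerProductSpace.toDual_apply_apply, _root_.smul_apply,
    ContinuousLinearMap.comp_apply, coe_innerSL_apply, nsmul_eq_mul, Nat.cast_ofNat,
    smul_eq_mul] at hderiv
  rw [hderiv, inner_sub_left]; ring

theorem HasGradientAt.const_mul_norm_sub_sq_eq
    (h : HasGradientAt (fun x => c * ‖L x - y‖ ^ 2) g a) (b : E) :
    c * ‖L b - y‖ ^ 2 = c * ‖L a - y‖ ^ 2 + ⟪g, b - a⟫ + c * ‖L (b - a)‖ ^ 2 := by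
  rw [h.inner_eq_of_const_mul_norm_sub_sq, map_sub,
    show L b - y = (L a - y) + (L b - L a) by abel, norm_add_sq_real]
  ring

end LeastSquares

open scoped MatrixOrder in
theorem Matrix.IsHermitian.dotProduct_mulVec_le_iSup_eigenvalues {ι : Type*} [Fintype ι]
    [DecidableEq ι] {A : Matrix ι ι ℝ} (hA : A.IsHermitian) (v : ι → ℝ) :
    v ⬝ᵥ A *ᵥ v ≤ (⨆ i, hA.eigenvalues i) * (v ⬝ᵥ v) := by
  have hle : A ≤ algebraMap ℝ _ (⨆ i, hA.eigenvalues i) := by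
    refine le_algebraMap_of_spectrum_le (fun x hx => ?_) hA.isSelfAdjoint
    rw [hA.spectrum_real_eq_range_eigenvalues] at hx
    obtain ⟨i, rfl⟩ := hx
    exact le_ciSup (Set.finite_range _).bddAbove i
  simpa [Matrix.sub_mulVec, dotProduct_sub, Algebra.algebraMap_eq_smul_one, Matrix.smul_mulVec,
    dotProduct_smul] using (Matrix.le_iff.mp hle).dotProduct_mulVec_nonneg v

theorem Matrix.norm_toEuclideanLin_sq_le {ι κ : Type*} [Fintype ι] [Fintype κ] [DecidableEq κ]
    (X : Matrix ι κ ℝ) (hA : (Xᵀ * X).IsHermitian) (v : EuclideanSpace ℝ κ) :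
    ‖toEuclideanLin X v‖ ^ 2 ≤ (⨆ i, hA.eigenvalues i) * ‖v‖ ^ 2 := by
  have hquad : ‖toEuclideanLin X v‖ ^ 2 = v.ofLp ⬝ᵥ (Xᵀ * X) *ᵥ v.ofLp := by
    rw [← Matrix.mulVec_mulVec, dotProduct_mulVec, vecMul_transpose, EuclideanSpace.real_norm_sq_eq]
    simp [dotProduct, sq]
  have hnorm : ‖v‖ ^ 2 = v.ofLp ⬝ᵥ v.ofLp := by
    rw [EuclideanSpace.real_norm_sq_eq]
    simp [dotProduct, sq]
  rw [hquad, hnorm]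
  exact hA.dotProduct_mulVec_le_iSup_eigenvalues _

theorem least_squares_gradient_step_potential_le {n m : ℕ}
    (X : Matrix (Fin n) (Fin m) ℝ) (y : Fin n → ℝ)
    (Rn : EuclideanSpace ℝ (Fin m) → ℝ)
    (hRn : ∀ a, Rn a = 1 / (2 * n) * ∑ i, (X.mulVec a i - y i) ^ 2)
    {gRn : EuclideanSpace ℝ (Fin m) → EuclideanSpace ℝ (Fin m)}
    (hgRn : ∀ a, HasGradientAt Rn (gRn a) a)
    (hA : (Xᵀ * X).IsHermitian)
    {η : ℝ} (hη : 0 < η) (hηmax : η ≤ n / (⨆ i, hA.eigenvalues i))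
    (a a' : EuclideanSpace ℝ (Fin m)) :
    ‖a' - (a - η • gRn a)‖ ^ 2 / 2 + η * Rn (a - η • gRn a)
      ≤ ‖a' - a‖ ^ 2 / 2 + η * Rn a
        - η * (Rn a - Rn a' + 1 / (2 * n) * ∑ i, (X.mulVec a i - X.mulVec a' i) ^ 2) := by
  set L := (toEuclideanLin X).toContinuousLinearMap
  have hsum : ∀ (b : EuclideanSpace ℝ (Fin m)) (z : Fin n → ℝ),
      ∑ i, (X.mulVec b i - z i) ^ 2 = ‖L b - WithLp.toLp 2 z‖ ^ 2 := by
    intro b z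
    simp [L, EuclideanSpace.real_norm_sq_eq]
  obtain rfl : Rn = fun x => 1 / (2 * n) * ‖L x - WithLp.toLp 2 y‖ ^ 2 :=
    funext fun x => by rw [hRn, hsum]
  obtain ⟨hn, hμ⟩ : (0 : ℝ) < n ∧ 0 < ⨆ i, hA.eigenvalues i := by
    simpa [(Nat.cast_nonneg n).not_gt] using div_pos_iff.mp (hη.trans_le hηmax)
  have hημ : η * (⨆ i, hA.eigenvalues i) ≤ n := (le_div_iff₀ hμ).mp hηmax
  have hsmooth (v : EuclideanSpace ℝ (Fin m)) : η * (1 / (2 * n) * ‖L v‖ ^ 2) ≤ ‖v‖ ^ 2 / 2 := by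
    have hLv : ‖L v‖ ^ 2 ≤ (⨆ i, hA.eigenvalues i) * ‖v‖ ^ 2 := X.norm_toEuclideanLin_sq_le hA v
    rw [← mul_assoc, mul_one_div, div_mul_eq_mul_div, div_le_div_iff₀ (by positivity) two_pos]
    nlinarith [mul_le_mul_of_nonneg_left hLv hη.le, mul_le_mul_of_nonneg_right hημ (sq_nonneg ‖v‖)]
  convert gradient_step_potential_le (fun a b => (hgRn a).const_mul_norm_sub_sq_eq b) hsmooth a a'
    using 4
  rw [hsum, map_sub, norm_sub_rev]
  rfl

theorem gradient_descent_early_stopping_general {n m : ℕ}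
    (X : Matrix (Fin n) (Fin m) ℝ) (y : Fin n → ℝ)
    (Rn : EuclideanSpace ℝ (Fin m) → ℝ)
    (hRn : ∀ a, Rn a = 1 / (2 * n) * ∑ i, (X.mulVec a i - y i) ^ 2)
    (gRn : EuclideanSpace ℝ (Fin m) → EuclideanSpace ℝ (Fin m))
    (hgRn : ∀ a, HasGradientAt Rn (gRn a) a)
    (hA : (Xᵀ * X).IsHermitian)
    (η : ℝ) (hη : 0 < η) (hηmax : η ≤ n / (⨆ i, hA.eigenvalues i))
    (α : ℕ → EuclideanSpace ℝ (Fin m))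
    (hupd : ∀ t, α (t + 1) = α t - η • gRn (α t))
    (α' : EuclideanSpace ℝ (Fin m))
    (ε : ℝ) (hε : 0 < ε)
    (T : ℕ) (hT : T = ⌈(‖α' - α 0‖ ^ 2 / 2 + η * Rn α') / (η * ε)⌉₊) :
    ∃ tstar ≤ T,
      (Rn (α tstar) - Rn α'
        + 1 / (2 * n) * ∑ i, (X.mulVec (α tstar) i - X.mulVec α' i) ^ 2 ≤ ε) ∧
      ∀ t, 1 ≤ t → t ≤ tstar →
        ‖α' - α t‖ ^ 2 / 2 ≤ ‖α' - α 0‖ ^ 2 / 2 + η * Rn α' := by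
  have hRn_nonneg (a : EuclideanSpace ℝ (Fin m)) : 0 ≤ Rn a := by rw [hRn]; positivity
  have hstep (t : ℕ) : ‖α' - α (t + 1)‖ ^ 2 / 2 + η * Rn (α (t + 1)) ≤
      ‖α' - α t‖ ^ 2 / 2 + η * Rn (α t) - η *
        (Rn (α t) - Rn α' + 1 / (2 * n) * ∑ i, (X.mulVec (α t) i - X.mulVec α' i) ^ 2) := by
    simpa only [hupd t] using
      least_squares_gradient_step_potential_le X y Rn hRn hgRn hA hη hηmax (α t) α'
  have hΦ₁ : ‖α' - α 1‖ ^ 2 / 2 + η * Rn (α 1) ≤ ‖α' - α 0‖ ^ 2 / 2 + η * Rn α' := by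
    have hcurv : 0 ≤ η * (1 / (2 * n) * ∑ i, (X.mulVec (α 0) i - X.mulVec α' i) ^ 2) := by
      positivity
    linarith [hstep 0]
  have hC_nonneg := add_nonneg (by positivity : 0 ≤ ‖α' - α 0‖ ^ 2 / 2)
    (mul_nonneg hη.le (hRn_nonneg α'))
  rcases hC_nonneg.eq_or_lt with hC | hC
  · -- Here `T = 0`, and `α 0 = α'` makes the gap at time `0` vanish.
    obtain rfl : α' = α 0 := by
      have hzero := (add_eq_zero_iff_of_nonneg (by positivity)
        (mul_nonneg hη.le (hRn_nonneg α'))).mp hC.symm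
      simpa [sub_eq_zero] using hzero.1
    exact ⟨0, Nat.zero_le _, by simpa using hε.le, fun t ht₁ ht₀ => by omega⟩
  · obtain ⟨t₀, ht₀, hgap, hball⟩ := exists_le_ceil_gap_le_and_forall_le
      (Φ := fun t => ‖α' - α t‖ ^ 2 / 2 + η * Rn (α t)) hη hε hC
      (fun t => add_nonneg (by positivity) (mul_nonneg hη.le (hRn_nonneg (α t)))) hstep hΦ₁
    refine ⟨t₀, hT ▸ ht₀, hgap, fun t ht₁ ht => ?_⟩
    linarith [hball t ht₁ ht, mul_nonneg hη.le (hRn_nonneg (α t))]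

/-- Discrete-time early stopping for gradient descent on least squares (Theorem 2
specialized): with step size `0 < η ≤ n/λ_max(XᵀX)` and
`T = ⌈(‖α' − α_0‖²/2 + ηR_n(α'))/(ηε)⌉`, there is `t* ≤ T` with small excess risk plus
squared empirical distance, and the iterates up to `t*` stay in the expanded Euclidean ball. -/
theorem gradient_descent_early_stopping {n m : ℕ} (hn : 0 < n) (hm : 0 < m)
    (X : Matrix (Fin n) (Fin m) ℝ) (y : Fin n → ℝ)
    (Rn : EuclideanSpace ℝ (Fin m) → ℝ)
    (hRn : ∀ a, Rn a = 1 / (2 * n) * ∑ i, (X.mulVec a i - y i) ^ 2)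
    (gRn : EuclideanSpace ℝ (Fin m) → EuclideanSpace ℝ (Fin m))
    (hgRn : ∀ a, HasGradientAt Rn (gRn a) a)
    (hA : (Xᵀ * X).IsHermitian)
    (η : ℝ) (hη : 0 < η) (hηmax : η ≤ n / (⨆ i, hA.eigenvalues i))
    (α : ℕ → EuclideanSpace ℝ (Fin m))
    (hupd : ∀ t, α (t + 1) = α t - η • gRn (α t))
    (α' : EuclideanSpace ℝ (Fin m))
    (ε : ℝ) (hε : 0 < ε)
    (T : ℕ) (hT : T = ⌈(‖α' - α 0‖ ^ 2 / 2 + η * Rn α') / (η * ε)⌉₊) :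
    ∃ tstar ≤ T,
      (Rn (α tstar) - Rn α'
        + 1 / (2 * n) * ∑ i, (X.mulVec (α tstar) i - X.mulVec α' i) ^ 2 ≤ ε) ∧
      ∀ t, 1 ≤ t → t ≤ tstar →
        ‖α' - α t‖ ^ 2 / 2 ≤ ‖α' - α 0‖ ^ 2 / 2 + η * Rn α' :=
  gradient_descent_early_stopping_general X y Rn hRn gRn hgRn hA η hη hηmax α hupd α' ε hε T hT
end
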